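/- arXiv:2308.02018 — 2 statements merged into one kernel-verified Lean document; each statement's English description precedes it below -/
import Mathlib

section
/- Properties of the interior operator: for all gradual sensitivities g₁ = [s₁,s₂] and g₂ = [s₃,s₄] (so s₁ ≤ s₂ and s₃ ≤ s₄), the interior I(g₁,g₂) is defined if and only if g₁ ⪅ g₂ (i.e., s₁ ≤ s₄); and when defined, writing I(g₁,g₂) = ⟨g₁', g₂'⟩, both g₁' and g₂' are valid intervals (lower bound at most upper bound), g₁' ⊑ g₁, g₂' ⊑ g₂, and g₁' ⪅ g₂'. -/
/-- A gradual sensitivity: an interval `[lo, hi]` over the extended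
nonnegative reals `[0,∞]`. -/
structure Itv where
  lo : ENNReal
  hi : ENNReal

/-- A gradual sensitivity `[s₁,s₂]` is a valid interval when `s₁ ≤ s₂`. -/
def Itv.Valid (g : Itv) : Prop := g.lo ≤ g.hi

/-- Consistent sensitivity ordering: `[s₁,s₂] ⪅ [s₃,s₄]` iff `s₁ ≤ s₄`. -/
def Itv.cle (g₁ g₂ : Itv) : Prop := g₁.lo ≤ g₂.hi

/-- Precision (interval inclusion): `[s₁,s₂] ⊑ [s₃,s₄]` iff `s₃ ≤ s₁` and `s₂ ≤ s₄`. -/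
def Itv.prec (g₁ g₂ : Itv) : Prop := g₂.lo ≤ g₁.lo ∧ g₁.hi ≤ g₂.hi

/-- The unknown sensitivity `? = [0,∞]`. -/
noncomputable def Itv.unknown : Itv := ⟨0, ⊤⟩

open Classical in
/-- The interiorOp operator: I([s₁,s₂],[s₃,s₄]) = ⟨[s₁, s₂⊓s₄], [s₁⊔s₃, s₄]⟩,
defined when s₁ ≤ s₂⊓s₄ and s₁⊔s₃ ≤ s₄, undefined otherwise. -/
noncomputable def interiorOp (g₁ g₂ : Itv) : Option (Itv × Itv) :=
  if g₁.lo ≤ g₁.hi ⊓ g₂.hi ∧ g₁.lo ⊔ g₂.lo ≤ g₂.hi then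
    some (⟨g₁.lo, g₁.hi ⊓ g₂.hi⟩, ⟨g₁.lo ⊔ g₂.lo, g₂.hi⟩)
  else none

variable {g₁ g₂ g₁' g₂' : Itv}

theorem interiorOp_eq_some_iff :
    interiorOp g₁ g₂ = some (g₁', g₂') ↔
      (g₁.lo ≤ g₁.hi ⊓ g₂.hi ∧ g₁.lo ⊔ g₂.lo ≤ g₂.hi) ∧
        g₁' = ⟨g₁.lo, g₁.hi ⊓ g₂.hi⟩ ∧ g₂' = ⟨g₁.lo ⊔ g₂.lo, g₂.hi⟩ := by
  unfold interiorOp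
  split_ifs with h
  · simp [h, eq_comm]
  · simp only [h, false_and]

theorem interiorOp_domain_iff_cle (h₁ : g₁.Valid) (h₂ : g₂.Valid) :
    (g₁.lo ≤ g₁.hi ⊓ g₂.hi ∧ g₁.lo ⊔ g₂.lo ≤ g₂.hi) ↔ g₁.cle g₂ :=
  ⟨fun h => h.1.trans inf_le_right, fun h => ⟨le_inf h₁ h, sup_le h h₂⟩⟩

theorem interiorOp_isSome_iff (h₁ : g₁.Valid) (h₂ : g₂.Valid) :
    (interiorOp g₁ g₂).isSome ↔ g₁.cle g₂ := by
  rw [← interiorOp_domain_iff_cle h₁ h₂]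
  unfold interiorOp
  split_ifs with h
  · exact iff_of_true rfl h
  · exact iff_of_false Bool.false_ne_true h

theorem interiorOp_spec (h : interiorOp g₁ g₂ = some (g₁', g₂')) :
    g₁'.Valid ∧ g₂'.Valid ∧ g₁'.prec g₁ ∧ g₂'.prec g₂ ∧ g₁'.cle g₂' := by
  obtain ⟨⟨hlo, hhi⟩, rfl, rfl⟩ := interiorOp_eq_some_iff.mp h
  exact ⟨hlo, hhi, ⟨le_rfl, inf_le_left⟩, ⟨le_sup_right, le_rfl⟩, hlo.trans inf_le_right⟩

/-- Properties of the interiorOp operator: for valid intervals [s₁,s₂] and [s₃,s₄],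
the interiorOp is defined iff [s₁,s₂] ⪅ [s₃,s₄]; and when defined, both components
are valid intervals, componentwise more precise than the inputs, and consistently
ordered. -/
theorem interior_props (s₁ s₂ s₃ s₄ : ENNReal) (h₁ : s₁ ≤ s₂) (h₂ : s₃ ≤ s₄) :
    ((interiorOp ⟨s₁, s₂⟩ ⟨s₃, s₄⟩).isSome ↔ Itv.cle ⟨s₁, s₂⟩ ⟨s₃, s₄⟩) ∧
    (∀ g₁' g₂' : Itv, interiorOp ⟨s₁, s₂⟩ ⟨s₃, s₄⟩ = some (g₁', g₂') →
      g₁'.Valid ∧ g₂'.Valid ∧ g₁'.prec ⟨s₁, s₂⟩ ∧ g₂'.prec ⟨s₃, s₄⟩ ∧ g₁'.cle g₂') :=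
  ⟨interiorOp_isSome_iff h₁ h₂, fun _ _ => interiorOp_spec⟩
end

section
/- Monotonicity of consistent transitivity with respect to precision: let ε₁, ε₁', ε₂, ε₂' be evidences whose components are valid intervals, with ε₁ ⊑² ε₁' and ε₂ ⊑² ε₂'. If ε₁ ∘ ε₂ is defined, then ε₁' ∘ ε₂' is defined and ε₁ ∘ ε₂ ⊑² ε₁' ∘ ε₂'. -/
open Classical in
/-- The consistent transitivity operator on evidences:
⟨[s₁₁,s₁₂],[s₁₃,s₁₄]⟩ ∘ ⟨[s₂₁,s₂₂],[s₂₃,s₂₄]⟩ =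
⟨[s₁₁, s₁₂⊓s₁₄⊓s₂₂], [s₁₃⊔s₂₁⊔s₂₃, s₂₄]⟩,
defined when s₁₁ ≤ s₁₂⊓s₁₄⊓s₂₂ and s₁₃⊔s₂₁⊔s₂₃ ≤ s₂₄, undefined otherwise. -/
noncomputable def ctrans (ε₁ ε₂ : Itv × Itv) : Option (Itv × Itv) :=
  if ε₁.1.lo ≤ ε₁.1.hi ⊓ ε₁.2.hi ⊓ ε₂.1.hi ∧ ε₁.2.lo ⊔ ε₂.1.lo ⊔ ε₂.2.lo ≤ ε₂.2.hi then
    some (⟨ε₁.1.lo, ε₁.1.hi ⊓ ε₁.2.hi ⊓ ε₂.1.hi⟩, ⟨ε₁.2.lo ⊔ ε₂.1.lo ⊔ ε₂.2.lo, ε₂.2.hi⟩)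
  else none

/-- Evidence precision ⊑² (componentwise precision). -/
def evPrec (ε ε' : Itv × Itv) : Prop := ε.1.prec ε'.1 ∧ ε.2.prec ε'.2

/-- An evidence is a pair of valid intervals. -/
def evValid (ε : Itv × Itv) : Prop := ε.1.Valid ∧ ε.2.Valid

/-! Both the result and the definedness condition of `ε₁ ∘ ε₂` are read off one pair of
intervals, `ctransCore ε₁ ε₂`: the operator is defined exactly when that pair is valid.
Its lower ends are a projection and a join of lower ends, its upper ends a meet and a
projection of upper ends, so it is monotone for interval inclusion; and an interval
containing a valid one is valid. -/

def ctransCore (ε₁ ε₂ : Itv × Itv) : Itv × Itv :=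
  (⟨ε₁.1.lo, ε₁.1.hi ⊓ ε₁.2.hi ⊓ ε₂.1.hi⟩, ⟨ε₁.2.lo ⊔ ε₂.1.lo ⊔ ε₂.2.lo, ε₂.2.hi⟩)

theorem ctrans_eq_some_iff {ε₁ ε₂ ε : Itv × Itv} :
    ctrans ε₁ ε₂ = some ε ↔ evValid (ctransCore ε₁ ε₂) ∧ ctransCore ε₁ ε₂ = ε := by
  unfold ctrans
  split_ifs with h <;> simp_all [evValid, Itv.Valid, ctransCore]

theorem Itv.Valid.of_prec {g g' : Itv} (hg : g.Valid) (hp : g.prec g') : g'.Valid :=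
  hp.1.trans (hg.trans hp.2)

theorem evValid.of_evPrec {ε ε' : Itv × Itv} (hε : evValid ε) (hp : evPrec ε ε') :
    evValid ε' :=
  ⟨hε.1.of_prec hp.1, hε.2.of_prec hp.2⟩

theorem evPrec_ctransCore {ε₁ ε₁' ε₂ ε₂' : Itv × Itv} (hp₁ : evPrec ε₁ ε₁')
    (hp₂ : evPrec ε₂ ε₂') : evPrec (ctransCore ε₁ ε₂) (ctransCore ε₁' ε₂') :=
  ⟨⟨hp₁.1.1, inf_le_inf (inf_le_inf hp₁.1.2 hp₁.2.2) hp₂.1.2⟩,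
    ⟨sup_le_sup (sup_le_sup hp₁.2.1 hp₂.1.1) hp₂.2.1, hp₂.2.2⟩⟩

theorem ctrans_monotone_general (ε₁ ε₁' ε₂ ε₂' : Itv × Itv)
    (hp₁ : evPrec ε₁ ε₁') (hp₂ : evPrec ε₂ ε₂')
    (ε : Itv × Itv) (hc : ctrans ε₁ ε₂ = some ε) :
    ∃ ε', ctrans ε₁' ε₂' = some ε' ∧ evPrec ε ε' := by
  obtain ⟨hvalid, rfl⟩ := ctrans_eq_some_iff.1 hc
  have hprec := evPrec_ctransCore hp₁ hp₂
  exact ⟨_, ctrans_eq_some_iff.2 ⟨hvalid.of_evPrec hprec, rfl⟩, hprec⟩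

/-- Monotonicity of consistent transitivity with respect to precision:
if ε₁ ⊑² ε₁', ε₂ ⊑² ε₂' and ε₁ ∘ ε₂ is defined, then ε₁' ∘ ε₂' is defined and
ε₁ ∘ ε₂ ⊑² ε₁' ∘ ε₂'. -/
theorem ctrans_monotone (ε₁ ε₁' ε₂ ε₂' : Itv × Itv)
    (hv₁ : evValid ε₁) (hv₁' : evValid ε₁') (hv₂ : evValid ε₂) (hv₂' : evValid ε₂')
    (hp₁ : evPrec ε₁ ε₁') (hp₂ : evPrec ε₂ ε₂')
    (ε : Itv × Itv) (hc : ctrans ε₁ ε₂ = some ε) :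
    ∃ ε', ctrans ε₁' ε₂' = some ε' ∧ evPrec ε ε' :=
  ctrans_monotone_general ε₁ ε₁' ε₂ ε₂' hp₁ hp₂ ε hc
end
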